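/- The Toffoli matrix does not lie in the connected component of the identity within the set B₃ of bias-preserving three-qubit unitaries: Toffoli ∉ connectedComponentIn(B₃, I₈), where B₃ = {U ∈ U(8) : [U Z_j U†, Z_k] = 0 for all j,k ∈ {1,2,3}} carries the subspace topology from the 8×8 complex matrices. In other words, the Toffoli gate cannot be continuously connected to the identity through bias-preserving unitaries. -/
import Mathlib


open Matrix Kronecker

/-- The index type for three qubits. -/
abbrev Q3 := Fin 2 × Fin 2 × Fin 2

/-- The Pauli-Z matrix `diag(1, -1)`. -/
noncomputable def PauliZ : Matrix (Fin 2) (Fin 2) ℂ := !![1, 0; 0, -1]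

/-- `Z₁ = Z ⊗ I ⊗ I` on three qubits. -/
noncomputable def Z1 : Matrix Q3 Q3 ℂ :=
  PauliZ ⊗ₖ ((1 : Matrix (Fin 2) (Fin 2) ℂ) ⊗ₖ (1 : Matrix (Fin 2) (Fin 2) ℂ))

/-- `Z₂ = I ⊗ Z ⊗ I` on three qubits. -/
noncomputable def Z2 : Matrix Q3 Q3 ℂ :=
  (1 : Matrix (Fin 2) (Fin 2) ℂ) ⊗ₖ (PauliZ ⊗ₖ (1 : Matrix (Fin 2) (Fin 2) ℂ))

/-- `Z₃ = I ⊗ I ⊗ Z` on three qubits. -/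
noncomputable def Z3 : Matrix Q3 Q3 ℂ :=
  (1 : Matrix (Fin 2) (Fin 2) ℂ) ⊗ₖ ((1 : Matrix (Fin 2) (Fin 2) ℂ) ⊗ₖ PauliZ)

/-- The Toffoli gate: the 8×8 permutation matrix exchanging the basis vectors
indexed `(1,1,0)` and `(1,1,1)` and fixing all others (addition in `Fin 2` is XOR). -/
noncomputable def Toffoli : Matrix Q3 Q3 ℂ :=
  Matrix.of fun p q =>
    if p.1 = q.1 ∧ p.2.1 = q.2.1 ∧ p.2.2 = q.2.2 + q.1 * q.2.1 then 1 else 0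

/-- The family `(Z₁, Z₂, Z₃)`. -/
noncomputable def Zq : Fin 3 → Matrix Q3 Q3 ℂ := ![Z1, Z2, Z3]

/-- The set `B₃` of bias-preserving three-qubit unitaries:
`B₃ = {U ∈ U(8) : [U Z_j U†, Z_k] = 0 for all j, k ∈ {1,2,3}}`. -/
noncomputable def setB3 : Set (Matrix Q3 Q3 ℂ) :=
  {U | U ∈ Matrix.unitaryGroup Q3 ℂ ∧
    ∀ j k : Fin 3, (U * Zq j * Uᴴ) * Zq k - Zq k * (U * Zq j * Uᴴ) = 0}

noncomputable def sg : Fin 3 → Q3 → ℂ :=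
  ![fun p => if p.1 = 0 then 1 else -1,
    fun p => if p.2.1 = 0 then 1 else -1,
    fun p => if p.2.2 = 0 then 1 else -1]

set_option maxHeartbeats 1000000 in
lemma Zq_diag (j : Fin 3) : Zq j = Matrix.diagonal (sg j) := by
  fin_cases j <;>
  · ext ⟨a, b, c⟩ ⟨a', b', c'⟩
    fin_cases a <;> fin_cases b <;> fin_cases c <;> fin_cases a' <;> fin_cases b' <;> fin_cases c' <;>
      norm_num [Zq, Z1, Z2, Z3, sg, PauliZ, Matrix.diagonal, Matrix.one_apply,
        Matrix.kroneckerMap_apply, Prod.ext_iff]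

lemma sg_sq (j : Fin 3) (p : Q3) : sg j p * sg j p = 1 := by
  obtain ⟨a, b, c⟩ := p
  fin_cases j <;> fin_cases a <;> fin_cases b <;> fin_cases c <;> norm_num [sg]

lemma sgne {x y : Fin 2} (h : x ≠ y) :
    (if x = 0 then (1:ℂ) else -1) ≠ (if y = 0 then 1 else -1) := by
  fin_cases x <;> fin_cases y <;> simp_all <;> norm_num

lemma conj_diag {U : Matrix Q3 Q3 ℂ} (hU : U ∈ setB3) {p q : Q3} (hpq : p ≠ q) :
    (U * Zq 2 * Uᴴ) p q = 0 := by
  set A := U * Zq 2 * Uᴴ with hA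
  have key : ∀ k : Fin 3, sg k p ≠ sg k q → A p q = 0 := by
    intro k hk
    have h := hU.2 2 k
    rw [Zq_diag k] at h
    have h2 : A p q * sg k q - sg k p * A p q = 0 := by
      have := congrFun (congrFun h p) q
      simpa [Matrix.sub_apply, Matrix.mul_diagonal, Matrix.diagonal_mul] using this
    have h3 : A p q * (sg k q - sg k p) = 0 := by linear_combination h2
    rcases mul_eq_zero.mp h3 with h4 | h4
    · exact h4
    · exact absurd (sub_eq_zero.mp h4).symm hk
  obtain ⟨a, b, c⟩ := p
  obtain ⟨a', b', c'⟩ := q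
  have hor : a ≠ a' ∨ b ≠ b' ∨ c ≠ c' := by
    by_contra hcon
    push_neg at hcon
    exact hpq (by simp [Prod.ext_iff, hcon.1, hcon.2.1, hcon.2.2])
  rcases hor with h | h | h
  · exact key 0 (by simpa [sg] using sgne h)
  · exact key 1 (by simpa [sg] using sgne h)
  · exact key 2 (by simpa [sg] using sgne h)

/-- The distinguished index `(1,1,0)`. -/
def d0 : Q3 := (1, 1, 0)

lemma Zq2_sq : Zq 2 * Zq 2 = 1 := by
  rw [Zq_diag 2, Matrix.diagonal_mul_diagonal]
  have : (fun i => sg 2 i * sg 2 i) = fun _ => (1:ℂ) := funext (sg_sq 2)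
  rw [this, Matrix.diagonal_one]

lemma AA_one {U : Matrix Q3 Q3 ℂ} (hU : U ∈ setB3) :
    (U * Zq 2 * Uᴴ) * (U * Zq 2 * Uᴴ) = 1 := by
  have h1 : Uᴴ * U = 1 := by
    have := (Unitary.mem_iff.mp hU.1).1
    simpa [Matrix.star_eq_conjTranspose] using this
  have h2 : U * Uᴴ = 1 := by
    have := (Unitary.mem_iff.mp hU.1).2
    simpa [Matrix.star_eq_conjTranspose] using this
  calc (U * Zq 2 * Uᴴ) * (U * Zq 2 * Uᴴ)
      = U * Zq 2 * ((Uᴴ * U) * (Zq 2 * Uᴴ)) := by simp only [Matrix.mul_assoc]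
    _ = U * (Zq 2 * Zq 2) * Uᴴ := by rw [h1, one_mul]; simp only [Matrix.mul_assoc]
    _ = 1 := by rw [Zq2_sq, mul_one, h2]

lemma phi_sq {U : Matrix Q3 Q3 ℂ} (hU : U ∈ setB3) :
    (U * Zq 2 * Uᴴ) d0 d0 * (U * Zq 2 * Uᴴ) d0 d0 = 1 := by
  have h := congrFun (congrFun (AA_one hU) d0) d0
  rw [Matrix.mul_apply] at h
  rw [Finset.sum_eq_single d0 (fun k _ hk => by rw [conj_diag hU (Ne.symm hk), zero_mul])
    (fun h => absurd (Finset.mem_univ d0) h)] at h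
  simpa [Matrix.one_apply] using h

lemma phi_one : ((1 : Matrix Q3 Q3 ℂ) * Zq 2 * (1 : Matrix Q3 Q3 ℂ)ᴴ) d0 d0 = 1 := by
  simp [Zq_diag 2, Matrix.diagonal, sg, d0]

lemma phi_toffoli : (Toffoli * Zq 2 * Toffoliᴴ) d0 d0 = -1 := by
  rw [Zq_diag 2]
  simp [Matrix.mul_apply, Matrix.conjTranspose_apply, Matrix.diagonal, Toffoli, sg, d0,
    Fintype.sum_prod_type, Fin.sum_univ_two, Prod.ext_iff]

lemma phi_cont : Continuous fun U : Matrix Q3 Q3 ℂ => ((U * Zq 2 * Uᴴ) d0 d0).re := by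
  have h1 : Continuous fun U : Matrix Q3 Q3 ℂ => U * Zq 2 * Uᴴ :=
    (continuous_id.matrix_mul continuous_const).matrix_mul continuous_id.matrix_conjTranspose
  have h2 : Continuous fun M : Matrix Q3 Q3 ℂ => M d0 d0 :=
    (continuous_apply d0).comp (continuous_apply d0)
  exact Complex.continuous_re.comp (h2.comp h1)

/-- The Toffoli gate does not lie in the connected component of the identity within
the set `B₃` of bias-preserving three-qubit unitaries: Toffoli cannot be continuously
connected to the identity through bias-preserving unitaries. -/
theorem Toffoli_not_in_connectedComponentIn_setB3 :
    Toffoli ∉ connectedComponentIn setB3 (1 : Matrix Q3 Q3 ℂ) := by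
  intro h
  set C := connectedComponentIn setB3 (1 : Matrix Q3 Q3 ℂ) with hC
  have hne : C.Nonempty := ⟨_, h⟩
  have h1s : (1 : Matrix Q3 Q3 ℂ) ∈ setB3 := (connectedComponentIn_nonempty_iff).mp hne
  have h1C : (1 : Matrix Q3 Q3 ℂ) ∈ C := mem_connectedComponentIn h1s
  have hpc : IsPreconnected C := (isPreconnected_connectedComponentIn)
  set f := fun U : Matrix Q3 Q3 ℂ => ((U * Zq 2 * Uᴴ) d0 d0).re with hf
  have himg : IsPreconnected (f '' C) := hpc.image f phi_cont.continuousOn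
  have h1img : (1 : ℝ) ∈ f '' C := ⟨1, h1C, by simp only [hf]; rw [phi_one]; simp⟩
  have hm1img : (-1 : ℝ) ∈ f '' C := ⟨Toffoli, h, by simp only [hf]; rw [phi_toffoli]; simp⟩
  have h0 : (0 : ℝ) ∈ f '' C := himg.Icc_subset hm1img h1img (by norm_num)
  obtain ⟨U, hUC, hU0⟩ := h0
  have hUs : U ∈ setB3 := connectedComponentIn_subset _ _ hUC
  have hsq := phi_sq hUs
  rcases mul_self_eq_one_iff.mp hsq with h' | h' <;> rw [hf] at hU0 <;> simp [h'] at hU0
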